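/- arXiv:1409.8605 — 2 statements merged into one kernel-verified Lean document; each statement's English description precedes it below -/
import Mathlib

section
/- Let G = (X,E) be a finite d-regular graph with simple random walk rates Q(x,y) = 1/d for {x,y} ∈ E and uniform measure π(x) = 1/|X|. For every subgraph with edge set F, all ρ : X → ℝ₊ and ψ : X → ℝ, the on-diagonal Bochner sum B^on_F(ρ,ψ) := Σ_{{x,y}∈F} (μ/d²)·(1/2)(ψ(x)−ψ(y))²·[4θ(ρ(x),ρ(y)) + ∂₁θ(ρ(x),ρ(y))(ρ(y)−ρ(x)) + ∂₂θ(ρ(x),ρ(y))(ρ(x)−ρ(y))] satisfies B^on_F(ρ,ψ) ≥ (2/d)·A_F(ρ,ψ), where A_F(ρ,ψ) := Σ_{{x,y}∈F} (μ/d)(ψ(x)−ψ(y))² θ(ρ(x),ρ(y)) and μ = 1/|X|. -/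
/-
Write `L = log t - log s`. Away from the diagonal `θ(s,t) = (t - s)/L`, so
`∂₁θ(s,t) = ((t - s)/s - L)/L²`, and by the symmetry `θ(s,t) = θ(t,s)` also `∂₂θ(s,t) = ∂₁θ(t,s)`.
With `x = t/s` this gives
`∂₁θ(s,t)(t - s) + ∂₂θ(s,t)(s - t) = s (x - 1)(x - x⁻¹ - 2 log x) / L²`,
which is nonnegative because `x - x⁻¹ = 2 sinh (log x)` and `sinh y - y` has the sign of `y`.
Hence every summand of `B^on_F` dominates the corresponding summand of `(2/d) A_F`.
-/

/-- The logarithmic mean `θ(s,t) = ∫₀¹ s^(1-p) t^p dp`. -/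
noncomputable def logMean (s t : ℝ) : ℝ := ∫ p in (0:ℝ)..1, s ^ (1 - p) * t ^ p

/-- Partial derivative of the logarithmic mean in the first argument. -/
noncomputable def logMean₁ (s t : ℝ) : ℝ := deriv (fun u => logMean u t) s

/-- Partial derivative of the logarithmic mean in the second argument. -/
noncomputable def logMean₂ (s t : ℝ) : ℝ := deriv (fun v => logMean s v) t

open Real

theorem sub_one_mul_sub_inv_sub_two_mul_log_nonneg {x : ℝ} (hx : 0 < x) :
    0 ≤ (x - 1) * (x - x⁻¹ - 2 * log x) := by
  have hsinh : x - x⁻¹ - 2 * log x = 2 * (sinh (log x) - log x) := by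
    rw [sinh_log hx]; ring
  rw [hsinh]
  rcases le_total 1 x with h | h
  · have := self_le_sinh_iff.mpr (log_nonneg h)
    exact mul_nonneg (by linarith) (by linarith)
  · have := sinh_le_self_iff.mpr (log_nonpos hx.le h)
    exact mul_nonneg_of_nonpos_of_nonpos (by linarith) (by linarith)

theorem logMean_comm (s t : ℝ) : logMean s t = logMean t s := by
  unfold logMean
  have h := intervalIntegral.integral_comp_sub_left (fun p => t ^ (1 - p) * s ^ p)
    (a := 0) (b := 1) 1
  simp only [sub_sub_cancel, sub_self, sub_zero] at h
  rw [← h]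
  congr 1
  ext p
  ring

theorem logMean₂_eq_logMean₁ (s t : ℝ) : logMean₂ s t = logMean₁ t s := by
  simp only [logMean₂, logMean₁, logMean_comm s]

theorem log_sub_log_ne_zero {s t : ℝ} (hs : 0 < s) (ht : 0 < t) (hst : s ≠ t) :
    log t - log s ≠ 0 :=
  sub_ne_zero.mpr fun h => hst (log_injOn_pos hs ht h.symm)

theorem logMean_eq_div_log_sub_log {s t : ℝ} (hs : 0 < s) (ht : 0 < t) (hst : s ≠ t) :
    logMean s t = (t - s) / (log t - log s) := by
  have hL := log_sub_log_ne_zero hs ht hst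
  have hexp : ∀ p : ℝ, s ^ (1 - p) * t ^ p = s * exp ((log t - log s) * p) := by
    intro p
    rw [rpow_def_of_pos hs, rpow_def_of_pos ht, ← exp_log hs, ← exp_add, ← exp_add, log_exp]
    ring_nf
  unfold logMean
  simp_rw [hexp]
  rw [intervalIntegral.integral_const_mul,
    intervalIntegral.integral_comp_mul_left (fun x => exp x) hL,
    mul_zero, mul_one, integral_exp, exp_zero, exp_sub, exp_log hs, exp_log ht, smul_eq_mul]
  field_simp

theorem hasDerivAt_logMean_left {s t : ℝ} (hs : 0 < s) (ht : 0 < t) (hst : s ≠ t) :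
    HasDerivAt (fun u => logMean u t) (((t - s) / s - (log t - log s)) / (log t - log s) ^ 2) s := by
  have hL := log_sub_log_ne_zero hs ht hst
  have hquot : HasDerivAt (fun u => (t - u) / (log t - log u))
      ((-1 * (log t - log s) - (t - s) * -s⁻¹) / (log t - log s) ^ 2) s :=
    ((hasDerivAt_id s).const_sub t).div ((hasDerivAt_log hs.ne').const_sub (log t)) hL
  have hformula : (fun u => logMean u t) =ᶠ[nhds s] fun u => (t - u) / (log t - log u) := by
    filter_upwards [eventually_gt_nhds hs, eventually_ne_nhds hst] with u hu hut
    exact logMean_eq_div_log_sub_log hu ht hut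
  exact (hquot.congr_of_eventuallyEq hformula).congr_deriv (by ring)

theorem logMean₁_mul_sub_add_logMean₂_mul_sub_nonneg {s t : ℝ} (hs : 0 < s) (ht : 0 < t) :
    0 ≤ logMean₁ s t * (t - s) + logMean₂ s t * (s - t) := by
  rcases eq_or_ne s t with rfl | hst
  · simp
  rw [logMean₂_eq_logMean₁, logMean₁, logMean₁, (hasDerivAt_logMean_left hs ht hst).deriv,
    (hasDerivAt_logMean_left ht hs hst.symm).deriv]
  have hL := log_sub_log_ne_zero hs ht hst
  have hx := sub_one_mul_sub_inv_sub_two_mul_log_nonneg (div_pos ht hs)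
  rw [log_div ht.ne' hs.ne'] at hx
  have hcombine : ((t - s) / s - (log t - log s)) / (log t - log s) ^ 2 * (t - s)
      + ((s - t) / t - (log s - log t)) / (log s - log t) ^ 2 * (s - t)
      = s * ((t / s - 1) * (t / s - (t / s)⁻¹ - 2 * (log t - log s))) / (log t - log s) ^ 2 := by
    have hL' := log_sub_log_ne_zero ht hs hst.symm
    field_simp
    ring
  rw [hcombine]
  exact div_nonneg (mul_nonneg hs.le hx) (sq_nonneg _)

theorem onDiagonal_bound_general (X : Type*) [Fintype X] (d : ℕ)
    (F : Finset (X × X)) (ρ : X → ℝ) (hρ : ∀ x, 0 < ρ x) (ψ : X → ℝ) :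
    (∑ e ∈ F, ((Fintype.card X : ℝ))⁻¹ / (d : ℝ)^2 * ((1:ℝ)/2) * (ψ e.1 - ψ e.2)^2 *
        (4 * logMean (ρ e.1) (ρ e.2)
          + logMean₁ (ρ e.1) (ρ e.2) * (ρ e.2 - ρ e.1)
          + logMean₂ (ρ e.1) (ρ e.2) * (ρ e.1 - ρ e.2)))
      ≥ (2 / (d : ℝ)) *
        ∑ e ∈ F, ((Fintype.card X : ℝ))⁻¹ / (d : ℝ) * (ψ e.1 - ψ e.2)^2 *
          logMean (ρ e.1) (ρ e.2) := by
  rw [ge_iff_le, Finset.mul_sum]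
  refine Finset.sum_le_sum fun e _ => ?_
  have hkey := logMean₁_mul_sub_add_logMean₂_mul_sub_nonneg (hρ e.1) (hρ e.2)
  calc 2 / (d : ℝ) * ((Fintype.card X : ℝ)⁻¹ / d * (ψ e.1 - ψ e.2) ^ 2 * logMean (ρ e.1) (ρ e.2))
      = (Fintype.card X : ℝ)⁻¹ / (d : ℝ) ^ 2 * (1 / 2) * (ψ e.1 - ψ e.2) ^ 2 *
          (4 * logMean (ρ e.1) (ρ e.2)) := by ring
    _ ≤ _ := by gcongr; linarith

/-- On-diagonal bound for a subgraph (given by its edge set `F`, edges recorded by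
their endpoints) of a `d`-regular graph with uniform measure `μ = 1/|X|` and simple
random walk rates `1/d`: `B^on_F(ρ,ψ) ≥ (2/d) A_F(ρ,ψ)`. -/
theorem onDiagonal_bound (X : Type*) [Fintype X] [Nonempty X] (d : ℕ) (hd : 0 < d)
    (F : Finset (X × X)) (ρ : X → ℝ) (hρ : ∀ x, 0 < ρ x) (ψ : X → ℝ) :
    (∑ e ∈ F, ((Fintype.card X : ℝ))⁻¹ / (d : ℝ)^2 * ((1:ℝ)/2) * (ψ e.1 - ψ e.2)^2 *
        (4 * logMean (ρ e.1) (ρ e.2)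
          + logMean₁ (ρ e.1) (ρ e.2) * (ρ e.2 - ρ e.1)
          + logMean₂ (ρ e.1) (ρ e.2) * (ρ e.1 - ρ e.2)))
      ≥ (2 / (d : ℝ)) *
        ∑ e ∈ F, ((Fintype.card X : ℝ))⁻¹ / (d : ℝ) * (ψ e.1 - ψ e.2)^2 *
          logMean (ρ e.1) (ρ e.2) :=
  onDiagonal_bound_general X d F ρ hρ ψ
end

section
/- For the simple random walk on the complete graph Kₙ on n ≥ 2 vertices (transition rates Q(x,y) = 1/(n−1) for x ≠ y, uniform reversible measure), and for any positive density ρ and function ψ, the discrete Bochner quantity satisfies B(ρ,ψ) ≥ ((n+2)/(2(n−1))) A(ρ,ψ), where A(ρ,ψ) = (1/2)Σ_{x,y}(ψ(y)−ψ(x))²θ(ρ(x),ρ(y))Q(x,y)π(x) and B is defined by B(ρ,ψ) = (1/2)⟨L̂ρ·∇ψ,∇ψ⟩_π − ⟨ρ̂·∇ψ, ∇Lψ⟩_π. -/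
/-- Generator of simple random walk on the complete graph `Kₙ`,
with rates `Q(x,y) = 1/(n-1)` for `x ≠ y`. -/
noncomputable def Kgen (n : ℕ) (f : Fin n → ℝ) (x : Fin n) : ℝ :=
  ∑ y, (if x = y then 0 else (1 : ℝ) / (n - 1)) * (f y - f x)


/-!
Off the diagonal the rates are constant, so `∇Lψ = -(n/(n-1)) ∇ψ` and the inequality holds edge by
edge: what remains is the lower bound `L̂ρ(x,y) ≥ -((n-2)/(n-1)) θ(ρ(x),ρ(y))`. It follows from the
concavity of `θ`, an average of the concave weighted geometric means `s^(1-p) t^p`: the tangent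
planes at `(ρ(x),ρ(y))` lie above `θ(ρ(z),ρ(z)) = ρ(z)`, and summing over `z` gives
`(n-1) L̂ρ(x,y) ≥ Σ_z ρ(z) - n θ ≥ -(n-2) θ`, the last step because `θ` is at most the arithmetic mean.
-/

open Real Set Metric Finset

lemma hasDerivAt_intervalIntegral_mul_rpow {c e : ℝ → ℝ} (hc : Continuous c) (he : Continuous e)
    (a b : ℝ) {u : ℝ} (hu : 0 < u) :
    HasDerivAt (fun v => ∫ p in a..b, c p * v ^ e p)
      (∫ p in a..b, c p * (e p * u ^ (e p - 1))) u := by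
  have pos_of_mem {x : ℝ} (hx : x ∈ closedBall u (u / 2)) : 0 < x := by
    rw [mem_closedBall, dist_comm, dist_eq, abs_le] at hx
    linarith
  have hF' : ContinuousOn (fun q : ℝ × ℝ => c q.2 * (e q.2 * q.1 ^ (e q.2 - 1)))
      (closedBall u (u / 2) ×ˢ uIcc a b) :=
    (hc.comp continuous_snd).continuousOn.mul ((he.comp continuous_snd).continuousOn.mul
      (continuous_fst.continuousOn.rpow
        ((he.comp continuous_snd).sub continuous_const).continuousOn
        fun q hq => Or.inl (pos_of_mem hq.1).ne'))
  obtain ⟨C, hC⟩ :=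
    ((isCompact_closedBall u _).prod isCompact_uIcc).exists_bound_of_continuousOn hF'
  have hball : ball u (u / 2) ⊆ closedBall u (u / 2) := ball_subset_closedBall
  refine (intervalIntegral.hasDerivAt_integral_of_dominated_loc_of_deriv_le
    (F := fun v p => c p * v ^ e p) (F' := fun v p => c p * (e p * v ^ (e p - 1)))
    (μ := MeasureTheory.volume) (bound := fun _ => C)
    (ball_mem_nhds u (half_pos hu)) ?_ ?_ ?_ ?_ intervalIntegrable_const ?_).2
  · filter_upwards [ball_mem_nhds u (half_pos hu)] with x hx
    exact (hc.mul (continuous_const.rpow he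
      fun _ => Or.inl (pos_of_mem (hball hx)).ne')).aestronglyMeasurable
  · exact (hc.mul (continuous_const.rpow he fun _ => Or.inl hu.ne')).intervalIntegrable a b
  · exact (hc.mul (he.mul (continuous_const.rpow (he.sub continuous_const)
      fun _ => Or.inl hu.ne'))).aestronglyMeasurable
  · exact Filter.Eventually.of_forall fun p hp x hx =>
      hC (x, p) ⟨hball hx, uIoc_subset_uIcc hp⟩
  · exact Filter.Eventually.of_forall fun p _ x hx =>
      (hasDerivAt_rpow_const (Or.inl (pos_of_mem (hball hx)).ne')).const_mul (c p)

lemma le_rpow_mul_rpow_add_tangent {a b s t r : ℝ} (ha : 0 ≤ a) (hb : 0 ≤ b) (hab : a + b = 1)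
    (hs : 0 < s) (ht : 0 < t) (hr : 0 ≤ r) :
    r ≤ s ^ a * t ^ b + a * s ^ (a - 1) * t ^ b * (r - s) + b * s ^ a * t ^ (b - 1) * (r - t) := by
  have hG : 0 < s ^ a * t ^ b := by positivity
  have amgm := geom_mean_le_arith_mean2_weighted ha hb (div_nonneg hr hs.le)
    (div_nonneg hr ht.le) hab
  have hgeom : (r / s) ^ a * (r / t) ^ b = r / (s ^ a * t ^ b) := by
    rw [div_rpow hr hs.le, div_rpow hr ht.le, div_mul_div_comm, ← rpow_add' hr (by simp [hab]),
      hab, rpow_one]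
  have htangent : s ^ a * t ^ b + a * s ^ (a - 1) * t ^ b * (r - s)
      + b * s ^ a * t ^ (b - 1) * (r - t) = s ^ a * t ^ b * (a * (r / s) + b * (r / t)) := by
    rw [rpow_sub_one hs.ne', rpow_sub_one ht.ne']
    field_simp
    linear_combination (-(s * t)) * hab
  rw [htangent, ← div_le_iff₀' hG, ← hgeom]
  exact amgm

lemma logMean_le_add_div_two {s t : ℝ} (hs : 0 < s) (ht : 0 < t) :
    logMean s t ≤ (s + t) / 2 := by
  have hs' := hs.ne'
  have ht' := ht.ne'
  calc logMean s t ≤ ∫ p in (0:ℝ)..1, ((1 - p) * s + p * t) := by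
        refine intervalIntegral.integral_mono_on zero_le_one
          (Continuous.intervalIntegrable (by fun_prop (disch := assumption)) 0 1)
          (Continuous.intervalIntegrable (by fun_prop) 0 1) fun p hp => ?_
        exact geom_mean_le_arith_mean2_weighted (by linarith [hp.2]) hp.1 hs.le ht.le (by ring)
    _ = (s + t) / 2 := by
        rw [intervalIntegral.integral_add (Continuous.intervalIntegrable (by fun_prop) 0 1)
          (Continuous.intervalIntegrable (by fun_prop) 0 1)]
        simp [intervalIntegral.integral_comp_sub_left fun p : ℝ => p]
        ring

lemma logMean₁_eq {s t : ℝ} (hs : 0 < s) (ht : 0 < t) :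
    logMean₁ s t = ∫ p in (0:ℝ)..1, t ^ p * ((1 - p) * s ^ (1 - p - 1)) := by
  have hfun : (fun u => logMean u t) = fun u => ∫ p in (0:ℝ)..1, t ^ p * u ^ (1 - p) := by
    funext u
    simp only [logMean, mul_comm]
  rw [logMean₁, hfun]
  exact (hasDerivAt_intervalIntegral_mul_rpow (c := fun p => t ^ p) (e := fun p => 1 - p)
    (continuous_const.rpow continuous_id fun _ => Or.inl ht.ne')
    (continuous_const.sub continuous_id) 0 1 hs).deriv

lemma logMean₂_eq {s t : ℝ} (hs : 0 < s) (ht : 0 < t) :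
    logMean₂ s t = ∫ p in (0:ℝ)..1, s ^ (1 - p) * (p * t ^ (p - 1)) :=
  (hasDerivAt_intervalIntegral_mul_rpow
    (continuous_const.rpow (continuous_const.sub continuous_id) fun _ => Or.inl hs.ne')
    continuous_id 0 1 ht).deriv

lemma le_logMean_add_tangent {s t r : ℝ} (hs : 0 < s) (ht : 0 < t) (hr : 0 ≤ r) :
    r ≤ logMean s t + logMean₁ s t * (r - s) + logMean₂ s t * (r - t) := by
  have hs' := hs.ne'
  have ht' := ht.ne'
  have integrable {f : ℝ → ℝ} (hf : Continuous f) : IntervalIntegrable f MeasureTheory.volume 0 1 :=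
    hf.intervalIntegrable 0 1
  rw [logMean₁_eq hs ht, logMean₂_eq hs ht, ← intervalIntegral.integral_mul_const,
    ← intervalIntegral.integral_mul_const, logMean,
    ← intervalIntegral.integral_add (integrable (by fun_prop (disch := assumption)))
      (integrable (by fun_prop (disch := assumption))),
    ← intervalIntegral.integral_add (integrable (by fun_prop (disch := assumption)))
      (integrable (by fun_prop (disch := assumption)))]
  calc r = ∫ _ in (0:ℝ)..1, r := by simp
    _ ≤ _ := intervalIntegral.integral_mono_on zero_le_one intervalIntegrable_const
      (integrable (by fun_prop (disch := assumption))) fun p hp =>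
        (le_rpow_mul_rpow_add_tangent (sub_nonneg.2 hp.2) hp.1 (sub_add_cancel 1 p) hs ht
          hr).trans_eq (by ring)

lemma Kgen_eq (n : ℕ) (f : Fin n → ℝ) (x : Fin n) :
    Kgen n f x = ((∑ z, f z) - n * f x) / (n - 1) := by
  have h (y : Fin n) : (if x = y then 0 else (1 : ℝ) / (n - 1)) * (f y - f x)
      = (f y - f x) / (n - 1) := by
    split_ifs with hxy <;> simp [hxy, div_eq_inv_mul]
  simp only [Kgen, h, ← sum_div, sum_sub_distrib, sum_const, card_univ, Fintype.card_fin,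
    nsmul_eq_mul]

lemma Kgen_sub_Kgen (n : ℕ) (f : Fin n → ℝ) (x y : Fin n) :
    Kgen n f y - Kgen n f x = -(n / (n - 1)) * (f y - f x) := by
  rw [Kgen_eq, Kgen_eq]
  ring

/-- The function `L̂ρ` of the paper. -/
noncomputable def KgenHat (n : ℕ) (ρ : Fin n → ℝ) (x y : Fin n) : ℝ :=
  logMean₁ (ρ x) (ρ y) * Kgen n ρ x + logMean₂ (ρ x) (ρ y) * Kgen n ρ y

lemma neg_mul_logMean_le_KgenHat {n : ℕ} {ρ : Fin n → ℝ} (hρ : ∀ x, 0 < ρ x) {x y : Fin n}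
    (hxy : x ≠ y) :
    -((n - 2) / (n - 1)) * logMean (ρ x) (ρ y) ≤ KgenHat n ρ x y := by
  have hn : (2 : ℝ) ≤ n := by exact_mod_cast Fin.nontrivial_iff_two_le.1 ⟨x, y, hxy⟩
  set θ := logMean (ρ x) (ρ y)
  set θ₁ := logMean₁ (ρ x) (ρ y)
  set θ₂ := logMean₂ (ρ x) (ρ y)
  set S := ∑ z, ρ z
  have htangent : S ≤ n * θ + θ₁ * (S - n * ρ x) + θ₂ * (S - n * ρ y) := by
    have := sum_le_sum fun z (_ : z ∈ Finset.univ) =>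
      le_logMean_add_tangent (hρ x) (hρ y) (hρ z).le
    simpa only [sum_add_distrib, ← mul_sum, sum_sub_distrib, sum_const, card_univ,
      Fintype.card_fin, nsmul_eq_mul] using this
  have hS : ρ x + ρ y ≤ S := by
    rw [← sum_pair hxy]
    exact sum_le_sum_of_subset_of_nonneg (subset_univ _) fun z _ _ => (hρ z).le
  have hθ : 2 * θ ≤ ρ x + ρ y := by linarith [logMean_le_add_div_two (hρ x) (hρ y)]
  calc -((n - 2) / (n - 1)) * θ = -((n - 2) * θ) / (n - 1) := by ring
    _ ≤ (θ₁ * (S - n * ρ x) + θ₂ * (S - n * ρ y)) / (n - 1) := by gcongr <;> linarith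
    _ = KgenHat n ρ x y := by rw [KgenHat, Kgen_eq, Kgen_eq]; ring

lemma bochner_summand_bound {n : ℕ} {ρ : Fin n → ℝ} (hρ : ∀ x, 0 < ρ x) (ψ : Fin n → ℝ)
    (x y : Fin n) :
    (((n : ℝ) + 2) / (2 * ((n : ℝ) - 1))) * ((1/2) * ((ψ y - ψ x)^2 * logMean (ρ x) (ρ y) *
        (if x = y then 0 else (1 : ℝ) / (n - 1)) * ((1:ℝ)/n))) ≤
      (1/2) * ((1/2) * (KgenHat n ρ x y * (ψ y - ψ x) * (ψ y - ψ x) *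
          (if x = y then 0 else (1 : ℝ) / (n - 1)) * ((1:ℝ)/n)))
      - (1/2) * (logMean (ρ x) (ρ y) * (ψ y - ψ x) * (Kgen n ψ y - Kgen n ψ x) *
          (if x = y then 0 else (1 : ℝ) / (n - 1)) * ((1:ℝ)/n)) := by
  rcases eq_or_ne x y with rfl | hxy
  · simp
  have hn : (2 : ℝ) ≤ n := by exact_mod_cast Fin.nontrivial_iff_two_le.1 ⟨x, y, hxy⟩
  have hn1 : (0 : ℝ) < n - 1 := by linarith
  have hn0 : (0 : ℝ) < n := by linarith
  have hL := neg_mul_logMean_le_KgenHat hρ hxy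
  set θ := logMean (ρ x) (ρ y)
  rw [if_neg hxy, Kgen_sub_Kgen, ← sub_nonneg]
  have hgap : (1/2) * ((1/2) * (KgenHat n ρ x y * (ψ y - ψ x) * (ψ y - ψ x) * (1 / (n - 1)) *
        (1 / n)))
      - (1/2) * (θ * (ψ y - ψ x) * (-(n / (n - 1)) * (ψ y - ψ x)) * (1 / (n - 1)) * (1 / n))
      - ((n + 2) / (2 * (n - 1))) * ((1/2) * ((ψ y - ψ x)^2 * θ * (1 / (n - 1)) * (1 / n)))
      = (ψ y - ψ x)^2 / (4 * n * (n - 1)) * (KgenHat n ρ x y + (n - 2) / (n - 1) * θ) := by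
    field_simp
    ring
  rw [hgap]
  exact mul_nonneg (by positivity) (by linarith)

theorem completeGraph_bochner_general (n : ℕ)
    (ρ : Fin n → ℝ) (hρ : ∀ x, 0 < ρ x) (ψ : Fin n → ℝ) :
    (1/2) * ((1/2) * ∑ x, ∑ y,
        (logMean₁ (ρ x) (ρ y) * Kgen n ρ x + logMean₂ (ρ x) (ρ y) * Kgen n ρ y) *
          (ψ y - ψ x) * (ψ y - ψ x) *
          (if x = y then 0 else (1 : ℝ) / (n - 1)) * ((1:ℝ)/n))
      - (1/2) * ∑ x, ∑ y,
          logMean (ρ x) (ρ y) * (ψ y - ψ x) * (Kgen n ψ y - Kgen n ψ x) *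
            (if x = y then 0 else (1 : ℝ) / (n - 1)) * ((1:ℝ)/n)
      ≥ (((n : ℝ) + 2) / (2 * ((n : ℝ) - 1))) *
        ((1/2) * ∑ x, ∑ y, (ψ y - ψ x)^2 * logMean (ρ x) (ρ y) *
          (if x = y then 0 else (1 : ℝ) / (n - 1)) * ((1:ℝ)/n)) := by
  simp only [ge_iff_le, mul_sum, ← sum_sub_distrib]
  exact sum_le_sum fun x _ => sum_le_sum fun y _ => bochner_summand_bound hρ ψ x y

/-- Discrete Bochner inequality for the complete graph `Kₙ` (the Bernoulli–Laplace
model with `k = 1`): `B(ρ,ψ) ≥ ((n+2)/(2(n-1))) A(ρ,ψ)`, with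
`Q(x,y) = 1/(n-1)` for `x ≠ y`, uniform measure `π = 1/n`,
`B(ρ,ψ) = ½⟨L̂ρ·∇ψ,∇ψ⟩_π − ⟨ρ̂·∇ψ,∇Lψ⟩_π` and
`A(ρ,ψ) = ½ Σ_{x,y} (ψ(y)-ψ(x))² θ(ρ(x),ρ(y)) Q(x,y) π(x)`. -/
theorem completeGraph_bochner (n : ℕ) (hn : 2 ≤ n)
    (ρ : Fin n → ℝ) (hρ : ∀ x, 0 < ρ x) (ψ : Fin n → ℝ) :
    (1/2) * ((1/2) * ∑ x, ∑ y,
        (logMean₁ (ρ x) (ρ y) * Kgen n ρ x + logMean₂ (ρ x) (ρ y) * Kgen n ρ y) *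
          (ψ y - ψ x) * (ψ y - ψ x) *
          (if x = y then 0 else (1 : ℝ) / (n - 1)) * ((1:ℝ)/n))
      - (1/2) * ∑ x, ∑ y,
          logMean (ρ x) (ρ y) * (ψ y - ψ x) * (Kgen n ψ y - Kgen n ψ x) *
            (if x = y then 0 else (1 : ℝ) / (n - 1)) * ((1:ℝ)/n)
      ≥ (((n : ℝ) + 2) / (2 * ((n : ℝ) - 1))) *
        ((1/2) * ∑ x, ∑ y, (ψ y - ψ x)^2 * logMean (ρ x) (ρ y) *
          (if x = y then 0 else (1 : ℝ) / (n - 1)) * ((1:ℝ)/n)) :=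
  completeGraph_bochner_general n ρ hρ ψ
end
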